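/- For all X, Y ∈ 𝔪 the number tr(X·Y) is real, and the symmetric real bilinear form B(X,Y) := Re(tr(X·Y)) on the real vector space 𝔪 is nondegenerate of signature (p² + q² − 1, 2pq): there exist real subspaces V₊ and V₋ of 𝔪 with 𝔪 = V₊ ⊕ V₋, B(v₊, v₋) = 0 for all v₊ ∈ V₊ and v₋ ∈ V₋, B positive definite on V₊, B negative definite on V₋, dim_ℝ V₊ = p² + q² − 1, and dim_ℝ V₋ = 2pq. -/

import Mathlib

open Matrix

/-- The diagonal matrix `I_{p,q}` with `p` ones followed by `q` minus-ones, over `ℂ`. -/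
noncomputable def Ipq (p q : ℕ) : Matrix (Fin (p + q)) (Fin (p + q)) ℂ :=
  Matrix.diagonal (fun i => if (i : ℕ) < p then (1 : ℂ) else -1)

/-!
Write `J = I_{p,q}`, so that `Jᴴ = J = J⁻¹` and `𝔪 = {X : tr X = 0, Xᴴ = J X J}`. Then
`conj tr (X Y) = tr (Yᴴ Xᴴ) = tr (J Y X J) = tr (X Y)`, and `B` is nondegenerate because `𝔪` is
closed under `ᴴ` and `tr (X Xᴴ) = ∑ |Xᵢⱼ|² > 0` for `X ≠ 0`.

The involution `X ↦ J X J` preserves `𝔪` and splits it into its `±1`-eigenspaces. On the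
`+1`-eigenspace `X` is Hermitian, so `tr (X X) = tr (X Xᴴ) > 0`; on the `−1`-eigenspace it is
skew-Hermitian, so `tr (X X) < 0`; and the two are `B`-orthogonal because conjugation by `J`
negates `tr (A B)`. The `−1`-eigenspace consists of the block matrices `[[0, B], [−Bᴴ, 0]]`, of
real dimension `2pq`, while `dim 𝔪 = (p + q)² − 1` because `X ↦ J X` identifies
`{X : Xᴴ = J X J}` with the Hermitian matrices.
-/

open ComplexStarModule ComplexOrder

theorem finrank_selfAdjoint_of_complex (A : Type*) [AddCommGroup A] [Module ℂ A]
    [StarAddMonoid A] [StarModule ℂ A] [FiniteDimensional ℂ A] :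
    Module.finrank ℝ (selfAdjoint.submodule ℝ A) = Module.finrank ℂ A := by
  have h := (imaginaryPart (A := A)).finrank_range_add_finrank_ker
  rw [LinearMap.range_eq_top.2 imaginaryPart_surjective, finrank_top, ker_imaginaryPart,
    finrank_real_of_complex] at h
  change Module.finrank ℝ (selfAdjoint.submodule ℝ A) + _ = _ at h
  omega

namespace Matrix

variable {n : Type*} [Fintype n]

theorem re_trace_mul_conjTranspose_pos {X : Matrix n n ℂ} (hX : X ≠ 0) :
    0 < (trace (X * Xᴴ)).re :=
  (Complex.pos_iff.1 <| (posSemidef_self_mul_conjTranspose X).trace_nonneg.lt_of_ne <|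
    Ne.symm <| trace_mul_conjTranspose_self_eq_zero_iff.not.2 hX).1

variable [DecidableEq n]

theorem trace_conj_of_mul_self_eq_one {J : Matrix n n ℂ} (hJ2 : J * J = 1) (M : Matrix n n ℂ) :
    trace (J * M * J) = trace M := by
  rw [mul_assoc, trace_mul_comm, mul_assoc, hJ2, mul_one]

variable (J : Matrix n n ℂ)

def jHermitian : Submodule ℝ (Matrix n n ℂ) where
  carrier := {X | Xᴴ * J = J * X}
  add_mem' {X Y} hX hY := by simp_all [add_mul, mul_add]
  zero_mem' := by simp
  smul_mem' r X hX := by simp_all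

def tracelessJHermitian : Submodule ℝ (Matrix n n ℂ) where
  carrier := {X | trace X = 0 ∧ Xᴴ * J = J * X}
  add_mem' {X Y} hX hY := by simp_all [add_mul, mul_add]
  zero_mem' := by simp
  smul_mem' r X hX := by simp_all

def jEvenPart : Submodule ℝ (Matrix n n ℂ) where
  carrier := {X | X ∈ tracelessJHermitian J ∧ J * X * J = X}
  add_mem' {X Y} hX hY := ⟨add_mem hX.1 hY.1, by simp [mul_add, add_mul, hX.2, hY.2]⟩
  zero_mem' := ⟨zero_mem _, by simp⟩
  smul_mem' r X hX := ⟨Submodule.smul_mem _ r hX.1, by simp [hX.2]⟩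

def jOddPart : Submodule ℝ (Matrix n n ℂ) where
  carrier := {X | X ∈ tracelessJHermitian J ∧ J * X * J = -X}
  add_mem' {X Y} hX hY := ⟨add_mem hX.1 hY.1, by simp [mul_add, add_mul, hX.2, hY.2, add_comm]⟩
  zero_mem' := ⟨zero_mem _, by simp⟩
  smul_mem' r X hX := ⟨Submodule.smul_mem _ r hX.1, by simp [hX.2]⟩

variable {J}

theorem conjTranspose_eq_of_mem_jHermitian (hJ2 : J * J = 1) {X : Matrix n n ℂ}
    (hX : X ∈ jHermitian J) : Xᴴ = J * X * J := by
  have hX : Xᴴ * J = J * X := hX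
  rw [← hX, mul_assoc, hJ2, mul_one]

theorem im_trace_mul_eq_zero_of_mem_jHermitian (hJ2 : J * J = 1) {X Y : Matrix n n ℂ}
    (hX : X ∈ jHermitian J) (hY : Y ∈ jHermitian J) : (trace (X * Y)).im = 0 := by
  refine Complex.conj_eq_iff_im.1 ?_
  calc star (trace (X * Y)) = trace (Yᴴ * Xᴴ) := by rw [← trace_conjTranspose, conjTranspose_mul]
    _ = trace (J * (Y * X) * J) := by
      rw [conjTranspose_eq_of_mem_jHermitian hJ2 hX, conjTranspose_eq_of_mem_jHermitian hJ2 hY]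
      simp only [mul_assoc, ← mul_assoc J J, hJ2, one_mul]
    _ = trace (X * Y) := by rw [trace_conj_of_mul_self_eq_one hJ2, trace_mul_comm]

theorem im_trace_eq_zero_of_mem_jHermitian (hJ2 : J * J = 1) {X : Matrix n n ℂ}
    (hX : X ∈ jHermitian J) : (trace X).im = 0 := by
  simpa using im_trace_mul_eq_zero_of_mem_jHermitian hJ2 hX (Y := 1) (by simp [jHermitian])

theorem conjTranspose_mem_tracelessJHermitian (hJ2 : J * J = 1) {X : Matrix n n ℂ}
    (hX : X ∈ tracelessJHermitian J) : Xᴴ ∈ tracelessJHermitian J := by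
  obtain ⟨htr, hX⟩ := hX
  refine ⟨by rw [trace_conjTranspose, htr, star_zero], ?_⟩
  rw [conjTranspose_conjTranspose, conjTranspose_eq_of_mem_jHermitian hJ2 hX,
    ← mul_assoc, ← mul_assoc, hJ2, one_mul]

theorem conj_mem_tracelessJHermitian (hJ : J.IsHermitian) (hJ2 : J * J = 1)
    {X : Matrix n n ℂ} (hX : X ∈ tracelessJHermitian J) :
    J * X * J ∈ tracelessJHermitian J := by
  obtain ⟨htr, hX⟩ := hX
  refine ⟨by rw [trace_conj_of_mul_self_eq_one hJ2, htr], ?_⟩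
  rw [conjTranspose_mul, conjTranspose_mul, hJ.eq, conjTranspose_eq_of_mem_jHermitian hJ2 hX]
  simp only [mul_assoc, hJ2, mul_one, ← mul_assoc J J, one_mul]

theorem eq_zero_of_forall_re_trace_mul_eq_zero (hJ2 : J * J = 1) {X : Matrix n n ℂ}
    (hX : X ∈ tracelessJHermitian J)
    (h : ∀ Y ∈ tracelessJHermitian J, (trace (X * Y)).re = 0) : X = 0 := by
  by_contra hX0
  exact (re_trace_mul_conjTranspose_pos hX0).ne'
    (h _ (conjTranspose_mem_tracelessJHermitian hJ2 hX))

theorem conjTranspose_eq_of_mem_jEvenPart (hJ2 : J * J = 1) {X : Matrix n n ℂ}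
    (hX : X ∈ jEvenPart J) : Xᴴ = X := by
  rw [conjTranspose_eq_of_mem_jHermitian hJ2 hX.1.2, hX.2]

theorem conjTranspose_eq_neg_of_mem_jOddPart (hJ2 : J * J = 1) {X : Matrix n n ℂ}
    (hX : X ∈ jOddPart J) : Xᴴ = -X := by
  rw [conjTranspose_eq_of_mem_jHermitian hJ2 hX.1.2, hX.2]

theorem re_trace_mul_self_pos_of_mem_jEvenPart (hJ2 : J * J = 1) {X : Matrix n n ℂ}
    (hX : X ∈ jEvenPart J) (hX0 : X ≠ 0) : 0 < (trace (X * X)).re := by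
  simpa only [conjTranspose_eq_of_mem_jEvenPart hJ2 hX] using re_trace_mul_conjTranspose_pos hX0

theorem re_trace_mul_self_neg_of_mem_jOddPart (hJ2 : J * J = 1) {X : Matrix n n ℂ}
    (hX : X ∈ jOddPart J) (hX0 : X ≠ 0) : (trace (X * X)).re < 0 := by
  simpa [conjTranspose_eq_neg_of_mem_jOddPart hJ2 hX] using re_trace_mul_conjTranspose_pos hX0

theorem trace_mul_eq_zero_of_mem_jEvenPart_of_mem_jOddPart (hJ2 : J * J = 1)
    {A B : Matrix n n ℂ} (hA : A ∈ jEvenPart J) (hB : B ∈ jOddPart J) : trace (A * B) = 0 := by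
  have h : trace (A * B) = -trace (A * B) :=
    calc trace (A * B) = trace (J * A * J * -(J * B * J)) := by rw [hA.2, hB.2, neg_neg]
      _ = -trace (J * (A * B) * J) := by
        simp only [mul_neg, trace_neg, mul_assoc, ← mul_assoc J J, hJ2, one_mul]
      _ = -trace (A * B) := by rw [trace_conj_of_mul_self_eq_one hJ2]
  exact self_eq_neg.1 h

theorem jEvenPart_sup_jOddPart (hJ : J.IsHermitian) (hJ2 : J * J = 1) :
    jEvenPart J ⊔ jOddPart J = tracelessJHermitian J := by
  refine le_antisymm (sup_le (fun X hX => hX.1) (fun X hX => hX.1)) fun X hX => ?_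
  have hJXJ := conj_mem_tracelessJHermitian hJ hJ2 hX
  have hconj : J * (J * X * J) * J = X := by
    simp only [← mul_assoc, hJ2, one_mul]; rw [mul_assoc, hJ2, mul_one]
  refine Submodule.mem_sup.2 ⟨(2 : ℝ)⁻¹ • (X + J * X * J), ⟨?_, ?_⟩,
    (2 : ℝ)⁻¹ • (X - J * X * J), ⟨?_, ?_⟩, ?_⟩
  · exact Submodule.smul_mem _ _ (add_mem hX hJXJ)
  · simp only [Matrix.mul_smul, Matrix.smul_mul, mul_add, add_mul, hconj, add_comm]
  · exact Submodule.smul_mem _ _ (sub_mem hX hJXJ)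
  · simp only [Matrix.mul_smul, Matrix.smul_mul, mul_sub, sub_mul, hconj, neg_sub, ← smul_neg]
  · rw [← smul_add, add_add_sub_cancel, ← two_smul ℝ X, smul_smul, inv_mul_cancel₀ two_ne_zero,
      one_smul]

theorem disjoint_jEvenPart_jOddPart : Disjoint (jEvenPart J) (jOddPart J) := by
  refine Submodule.disjoint_def.2 fun X hXe hXo => ?_
  have h : X = -X := hXe.2.symm.trans hXo.2
  ext i j
  exact self_eq_neg.1 (congr_fun₂ h i j)

theorem finrank_jEvenPart_add_finrank_jOddPart (hJ : J.IsHermitian) (hJ2 : J * J = 1) :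
    Module.finrank ℝ (jEvenPart J) + Module.finrank ℝ (jOddPart J) =
      Module.finrank ℝ (tracelessJHermitian J) := by
  have h := Submodule.finrank_sup_add_finrank_inf_eq (jEvenPart J) (jOddPart J)
  rwa [jEvenPart_sup_jOddPart hJ hJ2, disjoint_jEvenPart_jOddPart.eq_bot, finrank_bot,
    add_zero, eq_comm] at h

theorem jHermitian_eq_comap_selfAdjoint (hJ : J.IsHermitian) :
    jHermitian J = (selfAdjoint.submodule ℝ (Matrix n n ℂ)).comap (LinearMap.mulLeft ℝ J) := by
  ext X
  change Xᴴ * J = J * X ↔ star (J * X) = J * X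
  rw [star_eq_conjTranspose, conjTranspose_mul, hJ.eq]

theorem finrank_jHermitian (hJ : J.IsHermitian) (hJ2 : J * J = 1) :
    Module.finrank ℝ (jHermitian J) = Fintype.card n ^ 2 := by
  let e : Matrix n n ℂ ≃ₗ[ℝ] Matrix n n ℂ :=
    LinearEquiv.ofInvolutive (LinearMap.mulLeft ℝ J) fun X => by simp [← mul_assoc, hJ2]
  rw [jHermitian_eq_comap_selfAdjoint hJ, show LinearMap.mulLeft ℝ J = e.toLinearMap from rfl,
    Submodule.comap_equiv_eq_map_symm,
    LinearEquiv.finrank_map_eq, finrank_selfAdjoint_of_complex, Module.finrank_matrix,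
    Module.finrank_self, sq, mul_one]

theorem finrank_tracelessJHermitian [Nonempty n] (hJ : J.IsHermitian) (hJ2 : J * J = 1) :
    Module.finrank ℝ (tracelessJHermitian J) = Fintype.card n ^ 2 - 1 := by
  set reTrace := (Complex.reLm.comp (traceLinearMap n ℝ ℂ)).domRestrict (jHermitian J)
  have hsurj : Function.Surjective reTrace := fun r => by
    refine ⟨⟨(r / Fintype.card n) • 1, Submodule.smul_mem _ _ (by simp [jHermitian])⟩, ?_⟩
    simp [reTrace]
  have hker : Module.finrank ℝ (LinearMap.ker reTrace) =
      Module.finrank ℝ (tracelessJHermitian J) := by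
    have hle : tracelessJHermitian J ≤ jHermitian J := fun X hX => hX.2
    have hker_eq :
        LinearMap.ker reTrace = (tracelessJHermitian J).comap (jHermitian J).subtype := by
      ext ⟨X, hX⟩
      simp only [reTrace, LinearMap.ker_domRestrict, Submodule.mem_comap, LinearMap.mem_ker]
      simp [tracelessJHermitian, Complex.ext_iff, im_trace_eq_zero_of_mem_jHermitian hJ2 hX,
        show Xᴴ * J = J * X from hX]
    rw [hker_eq, (Submodule.comapSubtypeEquivOfLe hle).finrank_eq]
  have h := reTrace.finrank_range_add_finrank_ker
  rw [LinearMap.range_eq_top.2 hsurj, finrank_top, Module.finrank_self, hker,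
    finrank_jHermitian hJ hJ2] at h
  omega

end Matrix

section Ipq

variable {p q : ℕ}

theorem isHermitian_Ipq : (Ipq p q).IsHermitian := by
  refine isHermitian_diagonal_of_self_adjoint _ (funext fun i => ?_)
  simp only [Pi.star_apply, apply_ite star, star_one, star_neg]

theorem Ipq_mul_self : Ipq p q * Ipq p q = 1 := by
  rw [Ipq, diagonal_mul_diagonal, ← diagonal_one]
  congr 1 with i
  split_ifs <;> norm_num

noncomputable def skewOffDiagonal (B : Matrix (Fin p) (Fin q) ℂ) :
    Matrix (Fin (p + q)) (Fin (p + q)) ℂ :=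
  reindex finSumFinEquiv finSumFinEquiv (fromBlocks 0 B (-Bᴴ) 0)

theorem skewOffDiagonal_mem_jOddPart (B : Matrix (Fin p) (Fin q) ℂ) :
    skewOffDiagonal B ∈ jOddPart (Ipq p q) := by
  refine ⟨⟨?_, ?_⟩, ?_⟩
  · simp [trace, Fin.sum_univ_add, skewOffDiagonal]
  · ext k l
    induction k using Fin.addCases <;> induction l using Fin.addCases <;>
      simp [skewOffDiagonal, Ipq, diagonal_mul, mul_diagonal]
  · ext k l
    induction k using Fin.addCases <;> induction l using Fin.addCases <;>
      simp [skewOffDiagonal, Ipq, diagonal_mul, mul_diagonal]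

noncomputable def jOddPartIpqEquiv : jOddPart (Ipq p q) ≃ₗ[ℝ] Matrix (Fin p) (Fin q) ℂ where
  toFun X := (X : Matrix (Fin (p + q)) (Fin (p + q)) ℂ).submatrix (Fin.castAdd q) (Fin.natAdd p)
  invFun B := ⟨skewOffDiagonal B, skewOffDiagonal_mem_jOddPart B⟩
  map_add' X Y := rfl
  map_smul' r X := rfl
  left_inv := by
    rintro ⟨X, hX⟩
    have hskew := congr_fun₂ (conjTranspose_eq_neg_of_mem_jOddPart Ipq_mul_self hX)
    have hodd := congr_fun₂ hX.2
    ext k l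
    induction k using Fin.addCases with
    | left i =>
      induction l using Fin.addCases with
      | left i' =>
        have h : X (Fin.castAdd q i) (Fin.castAdd q i') =
            -X (Fin.castAdd q i) (Fin.castAdd q i') := by
          simpa [Ipq, diagonal_mul, mul_diagonal] using hodd (Fin.castAdd q i) (Fin.castAdd q i')
        simp [skewOffDiagonal, self_eq_neg.1 h]
      | right j => simp [skewOffDiagonal]
    | right j =>
      induction l using Fin.addCases with
      | left i =>
        have h : star (X (Fin.castAdd q i) (Fin.natAdd p j)) =
            -X (Fin.natAdd p j) (Fin.castAdd q i) := hskew (Fin.natAdd p j) (Fin.castAdd q i)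
        simp [skewOffDiagonal, h]
      | right j' =>
        have h : X (Fin.natAdd p j) (Fin.natAdd p j') =
            -X (Fin.natAdd p j) (Fin.natAdd p j') := by
          simpa [Ipq, diagonal_mul, mul_diagonal] using hodd (Fin.natAdd p j) (Fin.natAdd p j')
        simp [skewOffDiagonal, self_eq_neg.1 h]
  right_inv B := by
    ext i j
    simp [skewOffDiagonal]

theorem finrank_jOddPart_Ipq : Module.finrank ℝ (jOddPart (Ipq p q)) = 2 * p * q := by
  rw [jOddPartIpqEquiv.finrank_eq, Module.finrank_matrix, Complex.finrank_real_complex,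
    Fintype.card_fin, Fintype.card_fin]
  ring

end Ipq

theorem stmt11_general (p q : ℕ) (hp : 1 ≤ p)
    (m : Set (Matrix (Fin (p + q)) (Fin (p + q)) ℂ))
    (hm : m = {A | Matrix.trace A = 0 ∧ Aᴴ * Ipq p q = Ipq p q * A}) :
    -- the trace form is real-valued on `𝔪`
    (∀ X ∈ m, ∀ Y ∈ m, (Matrix.trace (X * Y)).im = 0) ∧
    -- `B` is nondegenerate on `𝔪`
    (∀ X ∈ m, (∀ Y ∈ m, (Matrix.trace (X * Y)).re = 0) → X = 0) ∧
    -- signature `(p² + q² − 1, 2pq)`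
    (∃ Vp Vm : Submodule ℝ (Matrix (Fin (p + q)) (Fin (p + q)) ℂ),
      (Vp : Set (Matrix (Fin (p + q)) (Fin (p + q)) ℂ)) ⊆ m ∧
      (Vm : Set (Matrix (Fin (p + q)) (Fin (p + q)) ℂ)) ⊆ m ∧
      (∀ X ∈ m, ∃ a ∈ Vp, ∃ b ∈ Vm, X = a + b) ∧
      (∀ X, X ∈ Vp → X ∈ Vm → X = 0) ∧
      (∀ a ∈ Vp, ∀ b ∈ Vm, (Matrix.trace (a * b)).re = 0) ∧
      (∀ a ∈ Vp, a ≠ 0 → 0 < (Matrix.trace (a * a)).re) ∧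
      (∀ b ∈ Vm, b ≠ 0 → (Matrix.trace (b * b)).re < 0) ∧
      Module.finrank ℝ ↥Vp = p ^ 2 + q ^ 2 - 1 ∧
      Module.finrank ℝ ↥Vm = 2 * p * q) := by
  have hJ := isHermitian_Ipq (p := p) (q := q)
  have hJ2 := Ipq_mul_self (p := p) (q := q)
  have : Nonempty (Fin (p + q)) := ⟨⟨0, by omega⟩⟩
  subst hm
  refine ⟨fun X hX Y hY => im_trace_mul_eq_zero_of_mem_jHermitian hJ2 hX.2 hY.2,
    fun X hX h => eq_zero_of_forall_re_trace_mul_eq_zero hJ2 hX h,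
    jEvenPart (Ipq p q), jOddPart (Ipq p q), fun X hX => hX.1, fun X hX => hX.1,
    fun X hX => ?_, fun X hXe hXo => ?_, fun A hA B hB => ?_,
    fun A hA hA0 => re_trace_mul_self_pos_of_mem_jEvenPart hJ2 hA hA0,
    fun B hB hB0 => re_trace_mul_self_neg_of_mem_jOddPart hJ2 hB hB0, ?_, finrank_jOddPart_Ipq⟩
  · obtain ⟨A, hA, B, hB, rfl⟩ := Submodule.mem_sup.1 ((jEvenPart_sup_jOddPart hJ hJ2).ge hX)
    exact ⟨A, hA, B, hB, rfl⟩
  · exact Submodule.disjoint_def.1 disjoint_jEvenPart_jOddPart X hXe hXo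
  · simp [trace_mul_eq_zero_of_mem_jEvenPart_of_mem_jOddPart hJ2 hA hB]
  · have h := finrank_jEvenPart_add_finrank_jOddPart hJ hJ2
    rw [finrank_tracelessJHermitian hJ hJ2, finrank_jOddPart_Ipq, Fintype.card_fin] at h
    have hsq : (p + q) ^ 2 = p ^ 2 + q ^ 2 + 2 * p * q := by ring
    omega

/-- On `𝔪 = {X : tr X = 0, X†·I_{p,q} = I_{p,q}·X}` the trace `tr(X·Y)`
is real, and the real bilinear form `B(X,Y) = Re tr(X·Y)` is nondegenerate of signature
`(p² + q² − 1, 2pq)`. -/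
theorem stmt11 (p q : ℕ) (hp : 1 ≤ p) (hq : 1 ≤ q)
    (m : Set (Matrix (Fin (p + q)) (Fin (p + q)) ℂ))
    (hm : m = {A | Matrix.trace A = 0 ∧ Aᴴ * Ipq p q = Ipq p q * A}) :
    -- the trace form is real-valued on `𝔪`
    (∀ X ∈ m, ∀ Y ∈ m, (Matrix.trace (X * Y)).im = 0) ∧
    -- `B` is nondegenerate on `𝔪`
    (∀ X ∈ m, (∀ Y ∈ m, (Matrix.trace (X * Y)).re = 0) → X = 0) ∧
    -- signature `(p² + q² − 1, 2pq)`
    (∃ Vp Vm : Submodule ℝ (Matrix (Fin (p + q)) (Fin (p + q)) ℂ),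
      (Vp : Set (Matrix (Fin (p + q)) (Fin (p + q)) ℂ)) ⊆ m ∧
      (Vm : Set (Matrix (Fin (p + q)) (Fin (p + q)) ℂ)) ⊆ m ∧
      (∀ X ∈ m, ∃ a ∈ Vp, ∃ b ∈ Vm, X = a + b) ∧
      (∀ X, X ∈ Vp → X ∈ Vm → X = 0) ∧
      (∀ a ∈ Vp, ∀ b ∈ Vm, (Matrix.trace (a * b)).re = 0) ∧
      (∀ a ∈ Vp, a ≠ 0 → 0 < (Matrix.trace (a * a)).re) ∧
      (∀ b ∈ Vm, b ≠ 0 → (Matrix.trace (b * b)).re < 0) ∧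
      Module.finrank ℝ ↥Vp = p ^ 2 + q ^ 2 - 1 ∧
      Module.finrank ℝ ↥Vm = 2 * p * q) :=
  stmt11_general p q hp m hm
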